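/- Let t be a real number with −1/(d²−1) < t < 1/(d+1), and let Φ_t : M_d(ℂ) → M_d(ℂ) be the map Φ_t(X) = t·X + ((1−t)/d)·tr(X)·I_d. Then there do not exist vectors v_1, ..., v_{d²} ∈ ℂ^d such that the matrices {v_i v_i*}_{i=1}^{d²} are linearly independent and Φ_t(X) = Σ_{i=1}^{d²} (v_i v_i*) X (v_i v_i*) for all X ∈ M_d(ℂ). -/
import Mathlib

open Matrix

noncomputable def outer {d : ℕ} (x y : Fin d → ℂ) : Matrix (Fin d) (Fin d) ℂ :=
  fun k l => x k * (starRingEnd ℂ) (y l)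

lemma outer_mul_mul {d : ℕ} (x : Fin d → ℂ) (X : Matrix (Fin d) (Fin d) ℂ) :
    outer x x * X * outer x x
      = (∑ c, ∑ e, (starRingEnd ℂ) (x c) * X c e * x e) • outer x x := by
  ext a b
  simp only [Matrix.mul_apply, Matrix.smul_apply, outer, smul_eq_mul,
    Finset.sum_mul, Finset.mul_sum]
  rw [Finset.sum_comm]
  apply Finset.sum_congr rfl
  intro c _
  apply Finset.sum_congr rfl
  intro e _
  ring

lemma trace_outer {d : ℕ} (x : Fin d → ℂ) :
    (outer x x).trace = ∑ c, (starRingEnd ℂ) (x c) * x c := by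
  simp [Matrix.trace, Matrix.diag, outer, mul_comm]

theorem no_positive_rank_one_kraus {d : ℕ} (hd : 2 ≤ d) (t : ℝ)
    (ht1 : -(1 / ((d : ℝ) ^ 2 - 1)) < t) (ht2 : t < 1 / ((d : ℝ) + 1)) :
    ¬ ∃ v : Fin (d ^ 2) → EuclideanSpace ℂ (Fin d),
        (LinearIndependent ℂ fun i => outer (v i) (v i)) ∧
        ∀ X : Matrix (Fin d) (Fin d) ℂ,
          (t : ℂ) • X + (((1 - t) / d : ℝ) : ℂ) • X.trace • (1 : Matrix (Fin d) (Fin d) ℂ) =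
            ∑ i, outer (v i) (v i) * X * outer (v i) (v i) := by
  rintro ⟨v, hli, hΦ⟩
  have hdR : (2 : ℝ) ≤ (d : ℝ) := by exact_mod_cast hd
  have hd0 : (d : ℝ) ≠ 0 := by linarith
  have hdC : (d : ℂ) ≠ 0 := by
    exact_mod_cast (show ((d : ℝ) : ℂ) ≠ 0 by exact_mod_cast hd0)
  set P : Fin (d ^ 2) → Matrix (Fin d) (Fin d) ℂ := fun i => outer (v i) (v i) with hPdef
  set n : Fin (d ^ 2) → ℂ := fun i => ∑ c, (starRingEnd ℂ) (v i c) * v i c with hndef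
  set α : ℂ := (((1 - t) / d : ℝ) : ℂ) with hαdef
  have hαd : α * (d : ℂ) = 1 - (t : ℂ) := by
    rw [hαdef]
    push_cast
    field_simp
  have hscal : ∀ i (X : Matrix (Fin d) (Fin d) ℂ),
      P i * X * P i = (∑ c, ∑ e, (starRingEnd ℂ) (v i c) * X c e * v i e) • P i :=
    fun i X => outer_mul_mul (v i) X
  have hscal1 : ∀ i,
      (∑ c, ∑ e, (starRingEnd ℂ) (v i c) * (1 : Matrix (Fin d) (Fin d) ℂ) c e * v i e) = n i := by
    intro i
    show _ = ∑ c, (starRingEnd ℂ) (v i c) * v i c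
    apply Finset.sum_congr rfl
    intro c _
    rw [Finset.sum_eq_single c]
    · simp [Matrix.one_apply]
    · intro e _ hec
      simp [Matrix.one_apply, Ne.symm hec]
    · simp
  -- step 1 : identity decomposition
  have h1 : (1 : Matrix (Fin d) (Fin d) ℂ) = ∑ i, n i • P i := by
    have := hΦ 1
    simp only [Matrix.trace_one] at this
    rw [show (Fintype.card (Fin d) : ℂ) = (d : ℂ) by simp] at this
    have hLHS : (t : ℂ) • (1 : Matrix (Fin d) (Fin d) ℂ) + α • (d : ℂ) • (1 : Matrix (Fin d) (Fin d) ℂ)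
        = (1 : Matrix (Fin d) (Fin d) ℂ) := by
      rw [smul_smul, hαd, ← add_smul]
      norm_num
    calc (1 : Matrix (Fin d) (Fin d) ℂ)
        = (t : ℂ) • 1 + α • (d : ℂ) • (1 : Matrix (Fin d) (Fin d) ℂ) := hLHS.symm
      _ = ∑ i, P i * 1 * P i := this
      _ = ∑ i, n i • P i := by
          apply Finset.sum_congr rfl
          intro i _
          rw [hscal i 1, hscal1 i]
  -- trace of h1
  have htr : (d : ℂ) = ∑ i, n i * n i := by
    have h := congrArg Matrix.trace h1
    rw [Matrix.trace_one] at h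
    rw [show (Fintype.card (Fin d) : ℂ) = (d : ℂ) by simp] at h
    rw [h, Matrix.trace_sum]
    apply Finset.sum_congr rfl
    intro i _
    rw [Matrix.trace_smul]
    show n i • (outer (v i) (v i)).trace = n i * n i
    rw [trace_outer (v i), smul_eq_mul]
  -- step 2 : diagonal coefficient equation
  have hdiag : ∀ j, n j * n j = (t : ℂ) + α * n j * n j := by
    intro j
    have hj := hΦ (P j)
    have htrPj : (P j).trace = n j := by
      show (outer (v j) (v j)).trace = n j
      rw [trace_outer (v j)]
    rw [htrPj] at hj
    set G : Fin (d ^ 2) → ℂ :=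
      fun i => ∑ c, ∑ e, (starRingEnd ℂ) (v i c) * (P j) c e * v i e with hGdef
    have hj2 : (t : ℂ) • P j + α • n j • (1 : Matrix (Fin d) (Fin d) ℂ) = ∑ i, G i • P i := by
      rw [hj]
      apply Finset.sum_congr rfl
      intro i _
      rw [hscal i (P j)]
    rw [h1] at hj2
    have hzero : ∑ i, ((if i = j then (t : ℂ) else 0) + (α * n j) * n i - G i) • P i = 0 := by
      have e1 : ∑ i, ((if i = j then (t : ℂ) else 0) + (α * n j) * n i - G i) • P i
          = (∑ i, (if i = j then (t : ℂ) else 0) • P i)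
            + (∑ i, ((α * n j) * n i) • P i) - ∑ i, G i • P i := by
        rw [← Finset.sum_add_distrib, ← Finset.sum_sub_distrib]
        apply Finset.sum_congr rfl
        intro i _
        rw [sub_smul, add_smul]
      rw [e1]
      have e2 : ∑ i, (if i = j then (t : ℂ) else 0) • P i = (t : ℂ) • P j := by
        rw [Finset.sum_eq_single j] <;> simp +contextual
      have e3 : ∑ i, ((α * n j) * n i) • P i = α • n j • ∑ i, n i • P i := by
        rw [smul_smul, Finset.smul_sum]
        apply Finset.sum_congr rfl
        intro i _
        rw [smul_smul, mul_assoc]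
      rw [e2, e3, ← hj2]
      abel
    have hcoef := Fintype.linearIndependent_iff.mp hli _ hzero j
    rw [if_pos rfl] at hcoef
    have hGj : G j = n j * n j := by
      show (∑ c, ∑ e, (starRingEnd ℂ) (v j c) * (P j) c e * v j e)
          = (∑ c, (starRingEnd ℂ) (v j c) * v j c) * (∑ c, (starRingEnd ℂ) (v j c) * v j c)
      rw [Finset.sum_mul]
      apply Finset.sum_congr rfl
      intro c _
      rw [Finset.mul_sum]
      apply Finset.sum_congr rfl
      intro e _
      show (starRingEnd ℂ) (v j c) * (v j c * (starRingEnd ℂ) (v j e)) * v j e = _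
      ring
    rw [hGj] at hcoef
    linear_combination -hcoef
  have hmul : ∀ j, n j * n j * ((d : ℂ) - 1 + t) = (t : ℂ) * d := by
    intro j
    have h := hdiag j
    have h2 : (n j * n j) * (d : ℂ) = (t : ℂ) * d + (α * (d : ℂ)) * (n j * n j) := by
      linear_combination (d : ℂ) * h
    rw [hαd] at h2
    linear_combination h2
  -- sum over all d^2 indices
  have hsum : (d : ℂ) * ((d : ℂ) - 1 + t) = ((d ^ 2 : ℕ) : ℂ) * ((t : ℂ) * d) := by
    calc (d : ℂ) * ((d : ℂ) - 1 + t)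
        = (∑ i, n i * n i) * ((d : ℂ) - 1 + t) := by rw [← htr]
      _ = ∑ i, n i * n i * ((d : ℂ) - 1 + t) := by rw [Finset.sum_mul]
      _ = ∑ _i : Fin (d ^ 2), (t : ℂ) * d := Finset.sum_congr rfl fun i _ => hmul i
      _ = ((d ^ 2 : ℕ) : ℂ) * ((t : ℂ) * d) := by
          rw [Finset.sum_const]
          simp [Finset.card_univ]
  have hC : (t : ℂ) * (d : ℂ) ^ 2 = (d : ℂ) - 1 + t := by
    have h3 : (d : ℂ) * ((d : ℂ) - 1 + t) = (d : ℂ) * ((t : ℂ) * (d : ℂ) ^ 2) := by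
      push_cast at hsum ⊢
      linear_combination hsum
    exact (mul_left_cancel₀ hdC h3).symm
  have hR : t * (d : ℝ) ^ 2 = (d : ℝ) - 1 + t := by
    have h4 : ((t * (d : ℝ) ^ 2 : ℝ) : ℂ) = (((d : ℝ) - 1 + t : ℝ) : ℂ) := by
      push_cast
      linear_combination hC
    exact_mod_cast h4
  have hdp1 : (0 : ℝ) < (d : ℝ) + 1 := by linarith
  have hlt : t * ((d : ℝ) + 1) < 1 := by
    rw [lt_div_iff₀ hdp1] at ht2
    linarith
  have hdm1 : (0 : ℝ) < (d : ℝ) - 1 := by linarith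
  have hkey : t * ((d : ℝ) + 1) * ((d : ℝ) - 1) = (d : ℝ) - 1 := by
    linear_combination hR
  nlinarith [mul_lt_mul_of_pos_right hlt hdm1]
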